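/- arXiv:1411.4855 — 2 statements merged into one kernel-verified Lean document; each statement's English description precedes it below -/
import Mathlib

section
/- Let C be a σ-sparse Cantor subset of ℝ and a ∈ C. The map χ sending a C¹ diffeomorphism φ of ℝ that preserves C and fixes a to its derivative φ'(a) is a group homomorphism into ℝ*, and its image restricted to orientation-preserving such diffeomorphisms is a discrete subgroup of the multiplicative group of positive reals (hence trivial or infinite cyclic). -/
open Set Filter Topology Asymptotics

/-- A Cantor subset of the reals: nonempty, compact, perfect, totally disconnected. -/
def IsCantorSet (C : Set ℝ) : Prop :=
  C.Nonempty ∧ IsCompact C ∧ Perfect C ∧ IsTotallyDisconnected C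

/-- `C` is `σ`-sparse: any two points of `C` bound a complementary open interval of
relative length at least `σ`. -/
def SparseSet (σ : ℝ) (C : Set ℝ) : Prop :=
  ∀ a ∈ C, ∀ b ∈ C, a < b →
    ∃ α β : ℝ, a ≤ α ∧ α < β ∧ β ≤ b ∧ Set.Ioo α β ∩ C = ∅ ∧ σ * (b - a) ≤ β - α

/-- `φ` is a `C¹` diffeomorphism of `ℝ` with inverse `ψ`. -/
def IsC1DiffeoPair (φ ψ : ℝ → ℝ) : Prop :=
  ContDiff ℝ 1 φ ∧ ContDiff ℝ 1 ψ ∧ Function.LeftInverse ψ φ ∧ Function.RightInverse ψ φ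
/-- The set of derivatives at `a ∈ C` of orientation-preserving `C¹` diffeomorphisms
preserving `C` and fixing `a`. -/
def derivStab (C : Set ℝ) (a : ℝ) : Set ℝ :=
  {d : ℝ | ∃ φ ψ : ℝ → ℝ, IsC1DiffeoPair φ ψ ∧ StrictMono φ ∧
    φ '' C = C ∧ φ a = a ∧ deriv φ a = d}

/-!
Suppose `φ` maps `C` into itself, fixes `a ∈ C`, and `1 < φ'(a) < 1 + σ`. Take `c ∈ C` close
to `a` on a side where `C` accumulates at `a` (reflecting `C` if necessary), and a gap
`(α, β) ⊆ (a, c)` of `C` of length at least `σ (c - a)`, moved so that `α ∈ C`. Since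
`φ α - a` is `(α - a)` times a slope in `(1, 1 + σ)`, the point `φ α ∈ C` falls strictly inside
the gap. Hence the derivatives at `a` of the stabilizer avoid `(1, 1 + σ)`; as they form a
subgroup of the positive reals, taking logarithms shows that this subgroup is discrete, hence
cyclic.
-/

open scoped Pointwise

theorem IsClosed.exists_mem_Icc_Ioo_inter_eq_empty {X : Type*}
    [ConditionallyCompleteLinearOrder X] [TopologicalSpace X] [OrderTopology X]
    {C : Set X} (hC : IsClosed C) {a α β : X} (ha : a ∈ C) (haα : a ≤ α)
    (hgap : Ioo α β ∩ C = ∅) : ∃ α' ∈ C ∩ Icc a α, Ioo α' β ∩ C = ∅ := by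
  obtain ⟨α', hα'K, hmax⟩ :=
    (isCompact_Icc.inter_left hC).exists_isGreatest ⟨a, ha, le_rfl, haα⟩
  refine ⟨α', hα'K, eq_empty_of_forall_notMem ?_⟩
  rintro x ⟨⟨hα'x, hxβ⟩, hxC⟩
  rcases le_or_gt x α with hxα | hαx
  · exact (hmax ⟨hxC, hα'K.2.1.trans hα'x.le, hxα⟩).not_gt hα'x
  · exact hgap.subset ⟨⟨hαx, hxβ⟩, hxC⟩

theorem SparseSet.neg {σ : ℝ} {C : Set ℝ} (h : SparseSet σ C) : SparseSet σ (-C) := by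
  intro a ha b hb hab
  obtain ⟨α, β, hα, hαβ, hβ, hgap, hlen⟩ := h (-b) hb (-a) ha (neg_lt_neg hab)
  refine ⟨-β, -α, by linarith, by linarith, by linarith, ?_, by linarith⟩
  rw [← neg_Ioo, ← inter_neg, hgap, neg_empty]

theorem AccPt.mem_closure_Iio_or_Ioi {X : Type*} [LinearOrder X] [TopologicalSpace X]
    {a : X} {C : Set X} (h : AccPt a (𝓟 C)) :
    a ∈ closure (C ∩ Iio a) ∨ a ∈ closure (C ∩ Ioi a) := by
  rw [← mem_union, ← closure_union, ← inter_union_distrib_left, Iio_union_Ioi, ← sdiff_eq]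
  exact mem_closure_iff_clusterPt.2 (accPt_principal_iff_clusterPt.1 h)

theorem one_add_le_of_hasDerivAt_of_mem_closure_Ioi {σ d a : ℝ} {C : Set ℝ} {φ : ℝ → ℝ}
    (hcl : IsClosed C) (hsp : SparseSet σ C) (ha : a ∈ C) (hright : a ∈ closure (C ∩ Ioi a))
    (hφ : MapsTo φ C C) (hfa : φ a = a) (hd : HasDerivAt φ d a) (hd1 : 1 < d) :
    1 + σ ≤ d := by
  by_contra! hdσ
  have hslope : ∀ᶠ x in 𝓝[>] a, slope φ a x ∈ Ioo 1 (1 + σ) :=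
    ((hasDerivAt_iff_tendsto_slope.1 hd).eventually (Ioo_mem_nhds hd1 hdσ)).filter_mono
      (nhdsGT_le_nhdsNE a)
  obtain ⟨u, hau, hu⟩ := mem_nhdsGT_iff_exists_Ioo_subset.1 hslope
  obtain ⟨c, hcu : c < u, hcC, hac : a < c⟩ := mem_closure_iff.1 hright (Iio u) isOpen_Iio hau
  obtain ⟨α, β, haα, hαβ, hβc, hgap, hlen⟩ := hsp a ha c hcC hac
  obtain ⟨α', ⟨hα'C, haα', hα'α⟩, hgap'⟩ := hcl.exists_mem_Icc_Ioo_inter_eq_empty ha haα hgap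
  have hα'a : a < α' := by
    obtain ⟨x, hxβ : x < β, hxC, hax : a < x⟩ :=
      mem_closure_iff.1 hright (Iio β) isOpen_Iio (haα.trans_lt hαβ)
    by_contra! h
    exact hgap'.subset ⟨⟨h.trans_lt hax, hxβ⟩, hxC⟩
  obtain ⟨hs1, hs2⟩ := hu ⟨hα'a, by linarith⟩
  rw [slope_def_field, hfa, lt_div_iff₀ (by linarith)] at hs1
  rw [slope_def_field, hfa, div_lt_iff₀ (by linarith)] at hs2
  have hσc : σ * (α' - a) ≤ σ * (c - a) :=
    mul_le_mul_of_nonneg_left (by linarith) (by linarith)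
  exact hgap'.subset ⟨⟨by linarith, by linarith⟩, hφ hα'C⟩

theorem one_add_le_of_hasDerivAt {σ d a : ℝ} {C : Set ℝ} {φ : ℝ → ℝ}
    (hcl : IsClosed C) (hperf : Perfect C) (hsp : SparseSet σ C) (ha : a ∈ C)
    (hφ : MapsTo φ C C) (hfa : φ a = a) (hd : HasDerivAt φ d a) (hd1 : 1 < d) :
    1 + σ ≤ d := by
  rcases (hperf.acc a ha).mem_closure_Iio_or_Ioi with hleft | hright
  · have hd' : HasDerivAt (fun x ↦ -φ (-x)) d (-a) := by
      have hd_neg : HasDerivAt φ d (-(-a)) := by rwa [neg_neg]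
      simpa [Function.comp_def] using (hd_neg.comp (-a) (hasDerivAt_neg (-a))).fun_neg
    refine one_add_le_of_hasDerivAt_of_mem_closure_Ioi hcl.neg hsp.neg (by simpa) ?_
      (fun x hx ↦ by simpa using hφ hx) (by simp [hfa]) hd' hd1
    rwa [← neg_Iio, ← inter_neg, ← neg_closure, Set.mem_neg, neg_neg]
  · exact one_add_le_of_hasDerivAt_of_mem_closure_Ioi hcl hsp ha hright hφ hfa hd hd1

namespace IsC1DiffeoPair

variable {φ ψ : ℝ → ℝ}

theorem symm (h : IsC1DiffeoPair φ ψ) : IsC1DiffeoPair ψ φ :=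
  ⟨h.2.1, h.1, h.2.2.2, h.2.2.1⟩

theorem comp {φ' ψ' : ℝ → ℝ} (h : IsC1DiffeoPair φ ψ) (h' : IsC1DiffeoPair φ' ψ') :
    IsC1DiffeoPair (φ ∘ φ') (ψ' ∘ ψ) :=
  ⟨h.1.comp h'.1, h'.2.1.comp h.2.1, h.2.2.1.comp h'.2.2.1, h.2.2.2.comp h'.2.2.2⟩

theorem differentiable (h : IsC1DiffeoPair φ ψ) : Differentiable ℝ φ :=
  h.1.differentiable one_ne_zero

theorem deriv_symm_mul_deriv (h : IsC1DiffeoPair φ ψ) (x : ℝ) :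
    deriv ψ (φ x) * deriv φ x = 1 := by
  rw [← deriv_comp x (h.symm.differentiable _) (h.differentiable x),
    show ψ ∘ φ = id from funext h.2.2.1, deriv_id]

theorem deriv_ne_zero (h : IsC1DiffeoPair φ ψ) (x : ℝ) : deriv φ x ≠ 0 :=
  right_ne_zero_of_mul_eq_one (h.deriv_symm_mul_deriv x)

end IsC1DiffeoPair

section derivStab

theorem one_mem_derivStab (C : Set ℝ) (a : ℝ) : (1 : ℝ) ∈ derivStab C a :=
  ⟨id, id, ⟨contDiff_id, contDiff_id, fun _ ↦ rfl, fun _ ↦ rfl⟩, strictMono_id,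
    image_id C, rfl, deriv_id a⟩

theorem derivStab_subset_Ioi (C : Set ℝ) (a : ℝ) : derivStab C a ⊆ Ioi 0 := by
  rintro d ⟨φ, ψ, hp, hm, -, -, rfl⟩
  exact (hm.monotone.deriv_nonneg).lt_of_ne' (hp.deriv_ne_zero a)

variable {C : Set ℝ} {a : ℝ}

theorem mul_mem_derivStab {d e : ℝ} (hd : d ∈ derivStab C a) (he : e ∈ derivStab C a) :
    d * e ∈ derivStab C a := by
  obtain ⟨φ, ψ, hp, hm, hC, hfa, rfl⟩ := hd
  obtain ⟨φ', ψ', hp', hm', hC', hfa', rfl⟩ := he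
  refine ⟨φ ∘ φ', ψ' ∘ ψ, hp.comp hp', hm.comp hm', by rw [image_comp, hC', hC], ?_, ?_⟩
  · simp only [Function.comp_apply, hfa', hfa]
  · rw [deriv_comp a (hp.differentiable _) (hp'.differentiable a), hfa']

theorem inv_mem_derivStab {d : ℝ} (hd : d ∈ derivStab C a) : d⁻¹ ∈ derivStab C a := by
  obtain ⟨φ, ψ, hp, hm, hC, hfa, rfl⟩ := hd
  have hψa : ψ a = a := by simpa [hfa] using hp.2.2.1 a
  refine ⟨ψ, φ, hp.symm, fun x y hxy ↦ ?_, ?_, hψa, ?_⟩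
  · rwa [← hm.lt_iff_lt, hp.2.2.2 x, hp.2.2.2 y]
  · exact (congrArg (ψ '' ·) hC).symm.trans (hp.2.2.1.image_image C)
  · have h := hp.symm.deriv_symm_mul_deriv a
    rw [hψa] at h
    exact eq_inv_of_mul_eq_one_right h

theorem one_add_le_of_mem_derivStab {σ d : ℝ} (hcl : IsClosed C) (hperf : Perfect C)
    (hsp : SparseSet σ C) (ha : a ∈ C) (hd : d ∈ derivStab C a) (hd1 : 1 < d) :
    1 + σ ≤ d := by
  obtain ⟨φ, ψ, hp, -, hC, hfa, rfl⟩ := hd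
  exact one_add_le_of_hasDerivAt hcl hperf hsp ha (mapsTo_iff_image_subset.2 hC.subset) hfa
    (hp.differentiable a).hasDerivAt hd1

end derivStab

section GapSubgroup

variable {S : Set ℝ} {r : ℝ}

theorem eq_one_of_abs_sub_one_lt_of_gap (hpos : S ⊆ Ioi 0) (hinv : ∀ d ∈ S, d⁻¹ ∈ S)
    (hr : 1 < r) (hgap : ∀ d ∈ S, 1 < d → r ≤ d) {d : ℝ} (hd : d ∈ S)
    (hd1 : |d - 1| < 1 - r⁻¹) : d = 1 := by
  have hd0 : 0 < d := hpos hd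
  have hr0 : 0 < r := by linarith
  rcases lt_trichotomy d 1 with hlt | heq | hgt
  · have hdr : d ≤ r⁻¹ :=
      (le_inv_comm₀ hr0 hd0).1 (hgap _ (hinv d hd) ((one_lt_inv₀ hd0).2 hlt))
    have := neg_abs_le (d - 1)
    linarith
  · exact heq
  · have hrd := hgap d hd hgt
    have hr' : 1 - r⁻¹ ≤ r - 1 := by
      have hr1 : r⁻¹ ≤ 1 := inv_le_one_of_one_le₀ hr.le
      nlinarith [mul_nonneg (sub_nonneg.2 hr.le) (sub_nonneg.2 hr1), mul_inv_cancel₀ hr0.ne']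
    have := le_abs_self (d - 1)
    linarith

theorem exists_eq_zpow_of_gap (hpos : S ⊆ Ioi 0) (hone : 1 ∈ S)
    (hmul : ∀ d ∈ S, ∀ e ∈ S, d * e ∈ S) (hinv : ∀ d ∈ S, d⁻¹ ∈ S) (hr : 1 < r)
    (hgap : ∀ d ∈ S, 1 < d → r ≤ d) : ∃ p : ℝ, 1 ≤ p ∧ S = {x : ℝ | ∃ k : ℤ, x = p ^ k} := by
  let L : AddSubgroup ℝ :=
    { carrier := Real.log '' S
      zero_mem' := ⟨1, hone, Real.log_one⟩
      add_mem' := by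
        rintro _ _ ⟨d, hd, rfl⟩ ⟨e, he, rfl⟩
        exact ⟨d * e, hmul d hd e he, Real.log_mul (hpos hd).ne' (hpos he).ne'⟩
      neg_mem' := by
        rintro _ ⟨d, hd, rfl⟩
        exact ⟨d⁻¹, hinv d hd, Real.log_inv d⟩ }
  have hdisj : Disjoint (L : Set ℝ) (Ioo 0 (Real.log r)) := by
    refine disjoint_left.2 ?_
    rintro _ ⟨d, hd, rfl⟩ ⟨hlog0, hlogr⟩
    have hd0 : 0 < d := hpos hd
    exact (hgap d hd ((Real.log_pos_iff hd0.le).1 hlog0)).not_gt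
      ((Real.log_lt_log_iff hd0 (by linarith)).1 hlogr)
  obtain ⟨b, hb⟩ := L.cyclic_of_isolated_zero (Real.log_pos hr) hdisj
  obtain ⟨g, hg0, hL⟩ : ∃ g : ℝ, 0 ≤ g ∧ L = AddSubgroup.zmultiples g := by
    rw [hb, ← AddSubgroup.zmultiples_eq_closure]
    rcases le_total 0 b with hb0 | hb0
    · exact ⟨b, hb0, rfl⟩
    · exact ⟨-b, neg_nonneg.2 hb0, AddSubgroup.zmultiples_neg.symm⟩
  have hexp (k : ℤ) : Real.exp g ^ k = Real.exp (k • g) := by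
    rw [← Real.rpow_intCast, ← Real.exp_mul, zsmul_eq_mul, mul_comm]
  refine ⟨Real.exp g, Real.one_le_exp hg0, Set.ext fun x ↦ ⟨fun hx ↦ ?_, ?_⟩⟩
  · have hlog : Real.log x ∈ L := ⟨x, hx, rfl⟩
    rw [hL] at hlog
    obtain ⟨k, hk⟩ := AddSubgroup.mem_zmultiples_iff.1 hlog
    exact ⟨k, by rw [hexp, hk, Real.exp_log (hpos hx)]⟩
  · rintro ⟨k, rfl⟩
    obtain ⟨y, hy, hyk⟩ : k • g ∈ L := by rw [hL]; exact AddSubgroup.zsmul_mem_zmultiples g k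
    rwa [hexp, ← hyk, Real.exp_log (hpos hy)]

end GapSubgroup

/-- The derivative-at-`a` map on the stabilizer of `a ∈ C` is multiplicative with
nonzero values, and its image on orientation-preserving diffeomorphisms is a discrete
subgroup of the positive reals, hence trivial or infinite cyclic. -/
theorem deriv_at_point_hom_discrete (σ : ℝ) (hσ : 0 < σ) (C : Set ℝ)
    (hC : IsCantorSet C) (hsp : SparseSet σ C) (a : ℝ) (ha : a ∈ C) :
    (∀ φ ψ φ' ψ' : ℝ → ℝ, IsC1DiffeoPair φ ψ → φ '' C = C → φ a = a →
      IsC1DiffeoPair φ' ψ' → φ' '' C = C → φ' a = a →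
      deriv (φ ∘ φ') a = deriv φ a * deriv φ' a ∧ deriv φ a ≠ 0) ∧
    (derivStab C a ⊆ Set.Ioi 0 ∧ (1 : ℝ) ∈ derivStab C a ∧
      (∀ d ∈ derivStab C a, ∀ e ∈ derivStab C a, d * e ∈ derivStab C a) ∧
      (∀ d ∈ derivStab C a, d⁻¹ ∈ derivStab C a) ∧
      (∃ ε > 0, ∀ d ∈ derivStab C a, |d - 1| < ε → d = 1) ∧
      (∃ p : ℝ, 1 ≤ p ∧ derivStab C a = {x : ℝ | ∃ k : ℤ, x = p ^ k})) := by
  obtain ⟨-, hcomp, hperf, -⟩ := hC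
  have hgap : ∀ d ∈ derivStab C a, 1 < d → 1 + σ ≤ d := fun d hd ↦
    one_add_le_of_mem_derivStab hcomp.isClosed hperf hsp ha hd
  have hinv : ∀ d ∈ derivStab C a, d⁻¹ ∈ derivStab C a := fun d ↦ inv_mem_derivStab
  have hmul : ∀ d ∈ derivStab C a, ∀ e ∈ derivStab C a, d * e ∈ derivStab C a :=
    fun d hd e ↦ mul_mem_derivStab hd
  have hσ1 : 1 < 1 + σ := by linarith
  refine ⟨fun φ ψ φ' ψ' hp _ _ hp' _ hfa' ↦ ⟨?_, hp.deriv_ne_zero a⟩,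
    derivStab_subset_Ioi C a, one_mem_derivStab C a, hmul, hinv,
    ⟨1 - (1 + σ)⁻¹, sub_pos.2 (inv_lt_one_of_one_lt₀ hσ1), fun d hd ↦
      eq_one_of_abs_sub_one_lt_of_gap (derivStab_subset_Ioi C a) hinv hσ1 hgap hd⟩,
    exists_eq_zpow_of_gap (derivStab_subset_Ioi C a) (one_mem_derivStab C a) hmul hinv hσ1 hgap⟩
  rw [deriv_comp a (hp.differentiable _) (hp'.differentiable a), hfa']
end

section
/- Let C_λ (λ > 2) be the central Cantor set and φ an orientation-preserving C¹ diffeomorphism of ℝ with φ(C_λ) = C_λ. Then there is a finite covering of C_λ by disjoint closed intervals I₁, …, I_m such that on each I_k ∩ C_λ the map φ is affine: φ(x) = φ(c_k) + λ^{j_k}(x − c_k) for some integer j_k and some point c_k ∈ C_λ ∩ I_k. -/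
/-!
Every gap of `C_λ` has length `(λ - 2) λ^(-n-1)`, and `φ` maps gaps of `C_λ` onto gaps, so the
slope of `φ` across a gap is an integer power of `λ`. Since `φ'` is continuous and positive, near
a point it stays within a factor `λ` of a constant, so all nearby gaps carry the same slope `λ^j`.
Any two points `a < b` of `C_λ` enclose a gap filling all but a fraction `2/λ` of `[a, b]`;
splitting `[a, b]` at that gap shows that the defect `φ b - φ a - λ^j (b - a)` shrinks by `2/λ`
at every step, hence vanishes. Finally `C_λ` has dense complement, so cutting `ℝ` at points off
`C_λ`, spaced below a Lebesgue number of these neighbourhoods, yields the disjoint intervals.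
-/

open Set Filter Topology Asymptotics

/-- `C` is the central Cantor set of parameter `l`: the attractor of the IFS
`φ₀(x) = x/l`, `φ₁(x) = x/l + (l-1)/l`, i.e. the unique nonempty compact set with
`C = φ₀(C) ∪ φ₁(C)`. -/
def IsCentralCantor (l : ℝ) (C : Set ℝ) : Prop :=
  IsCompact C ∧ C.Nonempty ∧
    C = (fun x => x / l) '' C ∪ (fun x => x / l + (l - 1) / l) '' C

def IsGap (C : Set ℝ) (p q : ℝ) : Prop :=
  p ∈ C ∧ q ∈ C ∧ p < q ∧ ∀ z ∈ Ioo p q, z ∉ C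

def HasBridges (r : ℝ) (C : Set ℝ) : Prop :=
  ∀ a ∈ C, ∀ b ∈ C, a < b →
    ∃ p q, IsGap C p q ∧ a ≤ p ∧ q ≤ b ∧ (p - a) + (b - q) ≤ r * (b - a)

theorem IsGap.image {C : Set ℝ} {φ : ℝ → ℝ} {p q : ℝ} (h : IsGap C p q)
    (hmono : StrictMono φ) (hpres : φ '' C = C) : IsGap C (φ p) (φ q) := by
  obtain ⟨hp, hq, hpq, hgap⟩ := h
  refine ⟨hpres ▸ mem_image_of_mem φ hp, hpres ▸ mem_image_of_mem φ hq, hmono hpq, ?_⟩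
  rintro _ ⟨h₁, h₂⟩ hz
  rw [← hpres] at hz
  obtain ⟨y, hy, rfl⟩ := hz
  exact hgap y ⟨hmono.lt_iff_lt.1 h₁, hmono.lt_iff_lt.1 h₂⟩ hy

theorem HasBridges.dense_compl {r : ℝ} {C : Set ℝ} (h : HasBridges r C) : Dense Cᶜ := by
  refine dense_iff_exists_between.2 fun s t hst => ?_
  by_contra! hsub
  have hC : Ioo s t ⊆ C := fun x hx => by_contra fun hxC => (hsub x hxC hx.1).not_gt hx.2
  obtain ⟨a, hsa, hat⟩ := exists_between hst
  obtain ⟨b, hab, hbt⟩ := exists_between hat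
  obtain ⟨p, q, ⟨-, -, hpq, hgap⟩, hap, hqb, -⟩ :=
    h a (hC ⟨hsa, hat⟩) b (hC ⟨hsa.trans hab, hbt⟩) hab
  exact hgap ((p + q) / 2) ⟨by linarith, by linarith⟩ (hC ⟨by linarith, by linarith⟩)

theorem HasBridges.sub_eq_of_isGap {r s M : ℝ} {C W : Set ℝ} {f : ℝ → ℝ}
    (hC : HasBridges r C) (hr₀ : 0 ≤ r) (hr₁ : r < 1) (hW : W.OrdConnected)
    (hgap : ∀ p ∈ W, ∀ q ∈ W, IsGap C p q → f q - f p = s * (q - p))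
    (hbound : ∀ a ∈ C ∩ W, ∀ b ∈ C ∩ W, a < b →
      |f b - f a - s * (b - a)| ≤ M * (b - a)) :
    ∀ a ∈ C ∩ W, ∀ b ∈ C ∩ W, f b - f a = s * (b - a) := by
  have contract : ∀ n : ℕ, ∀ a ∈ C ∩ W, ∀ b ∈ C ∩ W, a ≤ b →
      |f b - f a - s * (b - a)| ≤ M * r ^ n * (b - a) := by
    intro n
    induction n with
    | zero =>
      intro a ha b hb hab
      rcases hab.eq_or_lt with rfl | hab
      · simp
      · simpa using hbound a ha b hb hab
    | succ n ih =>
      intro a ha b hb hab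
      rcases hab.eq_or_lt with rfl | hab
      · simp
      have hM : 0 ≤ M :=
        nonneg_of_mul_nonneg_left ((abs_nonneg _).trans (hbound a ha b hb hab)) (sub_pos.2 hab)
      obtain ⟨p, q, hpq, hap, hqb, hlen⟩ := hC a ha.1 b hb.1 hab
      have hpW : p ∈ W := hW.out ha.2 hb.2 ⟨hap, hpq.2.2.1.le.trans hqb⟩
      have hqW : q ∈ W := hW.out ha.2 hb.2 ⟨hap.trans hpq.2.2.1.le, hqb⟩
      have hleft := ih a ha p ⟨hpq.1, hpW⟩ hap
      have hright := ih q ⟨hpq.2.1, hqW⟩ b hb hqb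
      have hmid := hgap p hpW q hqW hpq
      calc |f b - f a - s * (b - a)|
          = |(f p - f a - s * (p - a)) + (f b - f q - s * (b - q))| := by
            congr 1; linear_combination hmid
        _ ≤ M * r ^ n * (p - a) + M * r ^ n * (b - q) :=
            (abs_add_le _ _).trans (add_le_add hleft hright)
        _ = M * r ^ n * ((p - a) + (b - q)) := by ring
        _ ≤ M * r ^ n * (r * (b - a)) := mul_le_mul_of_nonneg_left hlen (by positivity)
        _ = M * r ^ (n + 1) * (b - a) := by ring
  have affine_of_le :
      ∀ a ∈ C ∩ W, ∀ b ∈ C ∩ W, a ≤ b → f b - f a = s * (b - a) := by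
    intro a ha b hb hab
    have hlim : Tendsto (fun n : ℕ => M * r ^ n * (b - a)) atTop (𝓝 0) := by
      simpa using
        ((tendsto_pow_atTop_nhds_zero_of_lt_one hr₀ hr₁).const_mul M).mul_const (b - a)
    exact sub_eq_zero.1 (abs_nonpos_iff.1 (ge_of_tendsto' hlim fun n => contract n a ha b hb hab))
  intro a ha b hb
  rcases le_total a b with hab | hba
  · exact affine_of_le a ha b hb hab
  · linarith [affine_of_le b hb a ha hba]

theorem slope_mem_of_deriv_mem {f : ℝ → ℝ} {W T : Set ℝ} {a b : ℝ}
    (hf : Differentiable ℝ f) (hW : W.OrdConnected) (hT : ∀ x ∈ W, deriv f x ∈ T)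
    (ha : a ∈ W) (hb : b ∈ W) (hab : a < b) : (f b - f a) / (b - a) ∈ T := by
  obtain ⟨ξ, hξ, hderiv⟩ :=
    exists_deriv_eq_slope f hab hf.continuous.continuousOn fun x _ => (hf x).differentiableWithinAt
  exact hderiv ▸ hT ξ (hW.out ha hb (Ioo_subset_Icc_self hξ))

theorem eq_of_zpow_mem_Ioo {l c : ℝ} {j k : ℤ} (hl : 1 < l) (hj : l ^ j ∈ Ioo c (l * c))
    (hk : l ^ k ∈ Ioo c (l * c)) : j = k := by
  have not_lt :
      ∀ {j k : ℤ}, l ^ j ∈ Ioo c (l * c) → l ^ k ∈ Ioo c (l * c) → ¬ j < k := by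
    intro j k hj hk hjk
    have h := zpow_le_zpow_right₀ hl.le (Int.add_one_le_of_lt hjk)
    rw [zpow_add_one₀ (by linarith)] at h
    nlinarith [hj.1, hk.2]
  exact le_antisymm (le_of_not_gt (not_lt hk hj)) (le_of_not_gt (not_lt hj hk))

theorem exists_common_zpow_slope {C W : Set ℝ} {f : ℝ → ℝ} {l c : ℝ} (hl : 1 < l)
    (hf : Differentiable ℝ f) (hW : W.OrdConnected)
    (hderiv : ∀ x ∈ W, deriv f x ∈ Ioo c (l * c))
    (hslope : ∀ p q, IsGap C p q → ∃ k : ℤ, f q - f p = l ^ k * (q - p)) :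
    ∃ j : ℤ, ∀ p ∈ W, ∀ q ∈ W, IsGap C p q → f q - f p = l ^ j * (q - p) := by
  have hmem : ∀ p ∈ W, ∀ q ∈ W, ∀ k : ℤ, IsGap C p q → f q - f p = l ^ k * (q - p) →
      l ^ k ∈ Ioo c (l * c) := by
    intro p hp q hq k hpq hk
    have := slope_mem_of_deriv_mem hf hW hderiv hp hq hpq.2.2.1
    rwa [hk, mul_div_cancel_right₀ _ (sub_pos.2 hpq.2.2.1).ne'] at this
  by_cases h : ∃ p ∈ W, ∃ q ∈ W, IsGap C p q
  · obtain ⟨p, hp, q, hq, hpq⟩ := h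
    obtain ⟨j, hj⟩ := hslope p q hpq
    refine ⟨j, fun p' hp' q' hq' h' => ?_⟩
    obtain ⟨k, hk⟩ := hslope p' q' h'
    rwa [eq_of_zpow_mem_Ioo hl (hmem p hp q hq j hpq hj) (hmem p' hp' q' hq' k h' hk)]
  · push Not at h
    exact ⟨0, fun p hp q hq hpq => absurd hpq (h p hp q hq)⟩

theorem IsC1DiffeoPair.deriv_pos {φ ψ : ℝ → ℝ} (hφ : IsC1DiffeoPair φ ψ)
    (hmono : Monotone φ) (x : ℝ) : 0 < deriv φ x := by
  obtain ⟨hφ₁, hψ₁, hinv, -⟩ := hφ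
  have hchain : deriv ψ (φ x) * deriv φ x = 1 := by
    have h := ((hψ₁.differentiable one_ne_zero (φ x)).hasDerivAt).comp x
      (hφ₁.differentiable one_ne_zero x).hasDerivAt
    rw [show ψ ∘ φ = id from funext hinv] at h
    exact h.unique (hasDerivAt_id x)
  exact hmono.deriv_nonneg.lt_of_ne fun h => by simp [← h] at hchain

def IsIccCoverBelow (K : Set ℝ) (ρ t : ℝ) (S : Finset (ℝ × ℝ)) : Prop :=
  (∀ I ∈ S, I.1 ∈ K ∧ I.1 ≤ I.2 ∧ I.2 < t ∧ I.2 - I.1 < ρ) ∧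
    (S : Set (ℝ × ℝ)).PairwiseDisjoint (fun I => Icc I.1 I.2) ∧
    K ∩ Iic t ⊆ ⋃ I ∈ S, Icc I.1 I.2

theorem IsIccCoverBelow.extend {K : Set ℝ} {ρ t t' : ℝ} {S : Finset (ℝ × ℝ)}
    (hS : IsIccCoverBelow K ρ t' S) (hK : IsClosed K) (ht' : t' ∉ K) (ht : t ∉ K)
    (htt' : t' < t) (hρ : t - ρ < t') : ∃ S', IsIccCoverBelow K ρ t S' := by
  obtain ⟨hmem, hdisj, hcov⟩ := hS
  have hmem' : ∀ I ∈ S, I.1 ∈ K ∧ I.1 ≤ I.2 ∧ I.2 < t ∧ I.2 - I.1 < ρ := fun I hI =>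
    let ⟨h₁, h₂, h₃, h₄⟩ := hmem I hI
    ⟨h₁, h₂, h₃.trans htt', h₄⟩
  by_cases hne : (K ∩ Icc t' t).Nonempty
  · have hcpt : IsCompact (K ∩ Icc t' t) := isCompact_Icc.inter_left hK
    obtain ⟨a, ⟨haK, hat⟩, ha⟩ := hcpt.exists_isLeast hne
    obtain ⟨b, ⟨hbK, hbt⟩, hb⟩ := hcpt.exists_isGreatest hne
    have hta : t' < a := hat.1.lt_of_ne (by rintro rfl; exact ht' haK)
    have hbt' : b < t := hbt.2.lt_of_ne (by rintro rfl; exact ht hbK)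
    refine ⟨insert (a, b) S, ?_, ?_, ?_⟩
    · rw [Finset.forall_mem_insert]
      exact ⟨⟨haK, ha ⟨hbK, hbt⟩, hbt', by linarith [hat.1, hbt.2]⟩, hmem'⟩
    · rw [Finset.coe_insert]
      refine hdisj.insert fun I hI _ => Set.disjoint_left.2 fun x hx hx' => ?_
      linarith [hx.1, hx'.2, (hmem I hI).2.2.1]
    · rintro x ⟨hxK, hxt⟩
      rcases le_or_gt x t' with hx | hx
      · obtain ⟨I, hI, hxI⟩ := mem_iUnion₂.1 (hcov ⟨hxK, hx⟩)
        exact mem_iUnion₂.2 ⟨I, Finset.mem_insert_of_mem hI, hxI⟩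
      · exact mem_iUnion₂.2 ⟨(a, b), Finset.mem_insert_self _ _,
          ha ⟨hxK, hx.le, hxt⟩, hb ⟨hxK, hx.le, hxt⟩⟩
  · refine ⟨S, hmem', hdisj, ?_⟩
    rintro x ⟨hxK, hxt⟩
    rcases le_or_gt x t' with hx | hx
    · exact hcov ⟨hxK, hx⟩
    · exact absurd ⟨x, hxK, hx.le, hxt⟩ hne

theorem exists_isIccCoverBelow {K : Set ℝ} {ρ : ℝ} (hK : IsClosed K) (hdense : Dense Kᶜ)
    (hρ : 0 < ρ) (n : ℕ) :
    ∀ t ∉ K, K ∩ Iic t ⊆ Ioi (t - n * (ρ / 2)) → ∃ S, IsIccCoverBelow K ρ t S := by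
  induction n with
  | zero =>
    intro t _ h
    refine ⟨∅, by simp, by simp, fun x hx => ?_⟩
    exact absurd (mem_Iic.1 hx.2) (not_le.2 (by simpa using h hx))
  | succ n ih =>
    intro t ht h
    obtain ⟨t', ht', h₁, h₂⟩ := hdense.exists_between (show t - ρ < t - ρ / 2 by linarith)
    have hbelow : K ∩ Iic t' ⊆ Ioi (t' - n * (ρ / 2)) := fun x hx => by
      have := h ⟨hx.1, (mem_Iic.1 hx.2).trans (by linarith : t' ≤ t)⟩
      simp only [mem_Ioi, Nat.cast_succ] at this ⊢
      linarith
    obtain ⟨S, hS⟩ := ih t' ht' hbelow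
    exact hS.extend hK ht' ht (by linarith) h₁

theorem IsCompact.exists_disjoint_Icc_cover {ι : Type*} {K : Set ℝ} {U : ι → Set ℝ}
    (hK : IsCompact K) (hdense : Dense Kᶜ) (hU : ∀ i, IsOpen (U i)) (hKU : K ⊆ ⋃ i, U i) :
    ∃ (m : ℕ) (u v : Fin m → ℝ),
      (∀ k, u k ∈ K ∧ u k ≤ v k ∧ ∃ i, Icc (u k) (v k) ⊆ U i) ∧
      (∀ k k', k ≠ k' → Icc (u k) (v k) ∩ Icc (u k') (v k') = ∅) ∧
      K ⊆ ⋃ k, Icc (u k) (v k) := by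
  obtain ⟨ρ, hρ, hleb⟩ := lebesgue_number_lemma_of_metric hK hU hKU
  obtain ⟨A, hA⟩ := hK.bddBelow
  obtain ⟨B, hB⟩ := hK.bddAbove
  obtain ⟨n, hn⟩ := exists_nat_gt ((B + 1 - A) / (ρ / 2))
  rw [div_lt_iff₀ (by positivity)] at hn
  obtain ⟨S, hmem, hdisj, hcov⟩ := exists_isIccCoverBelow hK.isClosed hdense hρ n (B + 1)
    (fun h => by linarith [hB h]) fun x hx => show _ < x by linarith [hA hx.1]
  let e := S.equivFin
  refine ⟨S.card, fun k => (e.symm k).1.1, fun k => (e.symm k).1.2, fun k => ?_,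
    fun k k' hkk' => ?_, fun x hx => ?_⟩
  · obtain ⟨hu, hle, -, hlen⟩ := hmem _ (e.symm k).2
    obtain ⟨i, hi⟩ := hleb _ hu
    refine ⟨hu, hle, i, fun y hy => hi ?_⟩
    rw [Real.ball_eq_Ioo]
    constructor <;> linarith [hy.1, hy.2]
  · exact Set.disjoint_iff_inter_eq_empty.1 <| hdisj (e.symm k).2 (e.symm k').2
      fun h => hkk' (e.symm.injective (Subtype.ext h))
  · obtain ⟨I, hI, hxI⟩ := mem_iUnion₂.1 (hcov ⟨hx, (hB hx).trans (by linarith)⟩)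
    exact mem_iUnion.2 ⟨e ⟨I, hI⟩, by simpa using hxI⟩

namespace IsCentralCantor

variable {l : ℝ} {C : Set ℝ}

theorem exists_eq_branch (hC : IsCentralCantor l C) {x : ℝ} (hx : x ∈ C) :
    ∃ y ∈ C, x = y / l ∨ x = y / l + (l - 1) / l := by
  rw [hC.2.2] at hx
  rcases hx with ⟨y, hy, rfl⟩ | ⟨y, hy, rfl⟩
  exacts [⟨y, hy, .inl rfl⟩, ⟨y, hy, .inr rfl⟩]

theorem div_mem (hC : IsCentralCantor l C) {x : ℝ} (hx : x ∈ C) : x / l ∈ C := by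
  rw [hC.2.2]; exact .inl ⟨x, hx, rfl⟩

theorem div_add_mem (hC : IsCentralCantor l C) {x : ℝ} (hx : x ∈ C) :
    x / l + (l - 1) / l ∈ C := by
  rw [hC.2.2]; exact .inr ⟨x, hx, rfl⟩

theorem isLeast_zero (hC : IsCentralCantor l C) (hl : 1 < l) : IsLeast C 0 := by
  obtain ⟨m, hmC, hmle⟩ := hC.1.exists_isLeast hC.2.1
  have hm : m ≤ m / l := hmle (hC.div_mem hmC)
  rw [le_div_iff₀ (by linarith)] at hm
  suffices 0 ≤ m by
    obtain rfl : m = 0 := le_antisymm (by nlinarith) this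
    exact ⟨hmC, hmle⟩
  obtain ⟨y, hy, hmy | hmy⟩ := hC.exists_eq_branch hmC
  · have : y = m * l := by rw [hmy]; field_simp
    nlinarith [hmle hy]
  · have : y = m * l - (l - 1) := by rw [hmy]; field_simp; ring
    nlinarith [hmle hy]

theorem isGreatest_one (hC : IsCentralCantor l C) (hl : 1 < l) : IsGreatest C 1 := by
  obtain ⟨M, hMC, hMge⟩ := hC.1.exists_isGreatest hC.2.1
  have hM : M / l + (l - 1) / l ≤ M := hMge (hC.div_add_mem hMC)
  rw [← add_div, div_le_iff₀ (by linarith)] at hM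
  suffices M ≤ 1 by
    obtain rfl : M = 1 := le_antisymm this (by nlinarith)
    exact ⟨hMC, hMge⟩
  obtain ⟨y, hy, hMy | hMy⟩ := hC.exists_eq_branch hMC
  · have : y = M * l := by rw [hMy]; field_simp
    nlinarith [hMge hy]
  · have : y = M * l - (l - 1) := by rw [hMy]; field_simp; ring
    nlinarith [hMge hy]

theorem subset_Icc (hC : IsCentralCantor l C) (hl : 1 < l) : C ⊆ Icc 0 1 :=
  fun _ hx => ⟨(hC.isLeast_zero hl).2 hx, (hC.isGreatest_one hl).2 hx⟩

theorem div_mem_Icc (hC : IsCentralCantor l C) (hl : 1 < l) {y : ℝ} (hy : y ∈ C) :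
    y / l ∈ Icc 0 (1 / l) :=
  ⟨div_nonneg (hC.subset_Icc hl hy).1 (by linarith),
    div_le_div_of_nonneg_right (hC.subset_Icc hl hy).2 (by linarith)⟩

theorem isGap_middle (hC : IsCentralCantor l C) (hl : 2 < l) : IsGap C (1 / l) ((l - 1) / l) := by
  have hl₁ : 1 < l := by linarith
  refine ⟨hC.div_mem (hC.isGreatest_one hl₁).1,
    by simpa using hC.div_add_mem (hC.isLeast_zero hl₁).1,
    div_lt_div_of_pos_right (by linarith) (by linarith), fun z hz hzC => ?_⟩
  obtain ⟨y, hy, rfl | rfl⟩ := hC.exists_eq_branch hzC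
  · linarith [hz.1, (hC.div_mem_Icc hl₁ hy).2]
  · linarith [hz.2, (hC.div_mem_Icc hl₁ hy).1]

theorem le_or_ge (hC : IsCentralCantor l C) (hl : 2 < l) {x : ℝ} (hx : x ∈ C) :
    x ≤ 1 / l ∨ (l - 1) / l ≤ x := by
  by_contra! h
  exact (hC.isGap_middle hl).2.2.2 x h hx

theorem div_add_offset_mem (hC : IsCentralCantor l C) {t x : ℝ} (ht : t = 0 ∨ t = (l - 1) / l)
    (hx : x ∈ C) : x / l + t ∈ C := by
  rcases ht with rfl | rfl
  · simpa using hC.div_mem hx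
  · exact hC.div_add_mem hx

theorem mul_sub_offset_mem (hC : IsCentralCantor l C) (hl : 2 < l) {t x : ℝ}
    (ht : t = 0 ∨ t = (l - 1) / l) (hx : x ∈ C) (hxt : x ∈ Icc t (t + 1 / l)) :
    l * (x - t) ∈ C := by
  have hl₀ : l ≠ 0 := by linarith
  have hsep : 1 / l < (l - 1) / l := div_lt_div_of_pos_right (by linarith) (by linarith)
  obtain ⟨y, hy, rfl | rfl⟩ := hC.exists_eq_branch hx <;>
    have hy' := hC.div_mem_Icc (by linarith) hy <;> rcases ht with rfl | rfl
  · convert hy using 1; field_simp; ring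
  · linarith [hxt.1, hy'.2]
  · linarith [hxt.2, hy'.1]
  · convert hy using 1; field_simp; ring

theorem isGap_div_add_offset (hC : IsCentralCantor l C) (hl : 2 < l) {t p q : ℝ}
    (ht : t = 0 ∨ t = (l - 1) / l) (h : IsGap C p q) : IsGap C (p / l + t) (q / l + t) := by
  obtain ⟨hp, hq, hpq, hgap⟩ := h
  have hl₀ : 0 < l := by linarith
  refine ⟨hC.div_add_offset_mem ht hp, hC.div_add_offset_mem ht hq,
    add_lt_add_left (div_lt_div_of_pos_right hpq hl₀) t, fun z hz hzC => ?_⟩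
  have hz' := hC.mul_sub_offset_mem hl ht hzC
    ⟨by linarith [hz.1, (hC.div_mem_Icc (by linarith) hp).1],
      by linarith [hz.2, (hC.div_mem_Icc (by linarith) hq).2]⟩
  refine hgap _ ⟨?_, ?_⟩ hz'
  · rw [← div_lt_iff₀' hl₀]; linarith [hz.1]
  · rw [← lt_div_iff₀' hl₀]; linarith [hz.2]

theorem exists_offset (hC : IsCentralCantor l C) (hl : 2 < l) {a b : ℝ} (ha : a ∈ C)
    (hb : b ∈ C) (hab : a < b) (hstraddle : ¬ (a ≤ 1 / l ∧ (l - 1) / l ≤ b)) :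
    ∃ t, (t = 0 ∨ t = (l - 1) / l) ∧ a ∈ Icc t (t + 1 / l) ∧ b ∈ Icc t (t + 1 / l) := by
  have ha₀₁ := hC.subset_Icc (by linarith) ha
  have hb₀₁ := hC.subset_Icc (by linarith) hb
  rcases hC.le_or_ge hl ha with ha' | ha'
  · have hb' := (hC.le_or_ge hl hb).resolve_right fun h => hstraddle ⟨ha', h⟩
    exact ⟨0, .inl rfl, ⟨ha₀₁.1, by rwa [zero_add]⟩,
      ⟨by linarith [ha₀₁.1], by rwa [zero_add]⟩⟩
  · have hone : (l - 1) / l + 1 / l = 1 := by field_simp; ring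
    exact ⟨(l - 1) / l, .inr rfl, ⟨ha', by linarith [ha₀₁.2]⟩,
      ⟨by linarith, by linarith [hb₀₁.2]⟩⟩

theorem exists_bridge (hC : IsCentralCantor l C) (hl : 2 < l) {a b : ℝ} (ha : a ∈ C)
    (hb : b ∈ C) (hab : a < b) :
    ∃ p q, IsGap C p q ∧ a ≤ p ∧ q ≤ b ∧ (p - a) + (b - q) ≤ 2 / l * (b - a) ∧
      ∃ n : ℕ, q - p = (l - 2) / l ^ (n + 1) := by
  have hl₀ : 0 < l := by linarith
  obtain ⟨n, hn⟩ := pow_unbounded_of_one_lt (1 / (b - a)) (by linarith : 1 < l)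
  rw [div_lt_iff₀ (sub_pos.2 hab)] at hn
  -- Induct on the scale: a pair not straddling the middle gap lies in one half of `C`,
  -- which the dilation by `l` maps back onto `C`.
  induction n generalizing a b with
  | zero =>
    simp only [pow_zero, one_mul] at hn
    linarith [(hC.subset_Icc (by linarith) ha).1, (hC.subset_Icc (by linarith) hb).2]
  | succ n ih =>
    by_cases hstraddle : a ≤ 1 / l ∧ (l - 1) / l ≤ b
    · refine ⟨1 / l, (l - 1) / l, hC.isGap_middle hl, hstraddle.1, hstraddle.2, ?_, 0, by ring⟩
      have hba : b - a ≤ 1 := by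
        linarith [(hC.subset_Icc (by linarith) ha).1, (hC.subset_Icc (by linarith) hb).2]
      rw [div_mul_eq_mul_div, ← sub_nonneg]
      have hslack : 2 * (b - a) / l - ((1 / l - a) + (b - (l - 1) / l)) =
          (l - 2) / l * (1 - (b - a)) := by
        field_simp; ring
      rw [hslack]
      exact mul_nonneg (div_nonneg (by linarith) hl₀.le) (by linarith)
    · obtain ⟨t, ht, hat, hbt⟩ := hC.exists_offset hl ha hb hab hstraddle
      have hscale : ∀ x, l * (x - t) / l + t = x := fun x => by field_simp; ring
      obtain ⟨p, q, hgap, hap, hqb, hlen, k, hk⟩ :=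
        ih (hC.mul_sub_offset_mem hl ht ha hat) (hC.mul_sub_offset_mem hl ht hb hbt)
          (by nlinarith) (by rw [pow_succ] at hn; linarith)
      refine ⟨p / l + t, q / l + t, hC.isGap_div_add_offset hl ht hgap, ?_, ?_, ?_, k + 1, ?_⟩
      · rw [← hscale a]; gcongr
      · rw [← hscale b]; gcongr
      · rw [← hscale a, ← hscale b]
        refine le_of_eq_of_le ?_ ((div_le_div_of_nonneg_right hlen hl₀.le).trans_eq ?_) <;> ring
      · rw [show q / l + t - (p / l + t) = (q - p) / l by ring, hk, div_div, ← pow_succ]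

theorem isGap_length (hC : IsCentralCantor l C) (hl : 2 < l) {p q : ℝ} (h : IsGap C p q) :
    ∃ n : ℕ, q - p = (l - 2) / l ^ (n + 1) := by
  -- A gap is its own bridge.
  obtain ⟨p', q', ⟨hp', hq', hpq', -⟩, hpp', hq'q, -, hlen⟩ :=
    hC.exists_bridge hl h.1 h.2.1 h.2.2.1
  obtain rfl : p' = p := by
    by_contra hne
    exact h.2.2.2 p' ⟨lt_of_le_of_ne hpp' (Ne.symm hne), hpq'.trans_le hq'q⟩ hp'
  obtain rfl : q' = q := by
    by_contra hne
    exact h.2.2.2 q' ⟨hpp'.trans_lt hpq', lt_of_le_of_ne hq'q hne⟩ hq'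
  exact hlen

theorem hasBridges (hC : IsCentralCantor l C) (hl : 2 < l) : HasBridges (2 / l) C :=
  fun _ ha _ hb hab =>
    let ⟨p, q, hgap, hap, hqb, hlen, _⟩ := hC.exists_bridge hl ha hb hab
    ⟨p, q, hgap, hap, hqb, hlen⟩

theorem exists_zpow_slope (hC : IsCentralCantor l C) (hl : 2 < l) {φ : ℝ → ℝ}
    (hmono : StrictMono φ) (hpres : φ '' C = C) {p q : ℝ} (h : IsGap C p q) :
    ∃ k : ℤ, φ q - φ p = l ^ k * (q - p) := by
  obtain ⟨n, hn⟩ := hC.isGap_length hl h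
  obtain ⟨m, hm⟩ := hC.isGap_length hl (h.image hmono hpres)
  refine ⟨n - m, ?_⟩
  rw [hm, hn, zpow_sub₀ (by linarith), zpow_natCast, zpow_natCast]
  field_simp
  ring

theorem exists_affine_near (hC : IsCentralCantor l C) (hl : 2 < l) {φ : ℝ → ℝ}
    (hφ : ContDiff ℝ 1 φ) (hmono : StrictMono φ) (hpres : φ '' C = C)
    {x : ℝ} (hx : 0 < deriv φ x) :
    ∃ δ > 0, ∃ j : ℤ, ∀ a ∈ C ∩ Icc (x - δ) (x + δ),
      ∀ b ∈ C ∩ Icc (x - δ) (x + δ), φ b - φ a = l ^ j * (b - a) := by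
  have hl₁ : 1 < l := by linarith
  have hdiff : Differentiable ℝ φ := hφ.differentiable one_ne_zero
  obtain ⟨c, hc₁, hc₂⟩ := exists_between (div_lt_self hx hl₁)
  have hc₀ : 0 < c := (div_pos hx (by linarith)).trans hc₁
  have hnhds : deriv φ ⁻¹' Ioo c (l * c) ∈ 𝓝 x :=
    (hφ.continuous_deriv le_rfl).continuousAt.preimage_mem_nhds
      (Ioo_mem_nhds hc₂ (by rwa [div_lt_iff₀ (by linarith), mul_comm] at hc₁))
  obtain ⟨δ, hδ, hball⟩ := Metric.nhds_basis_closedBall.mem_iff.1 hnhds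
  rw [Real.closedBall_eq_Icc] at hball
  have hderiv : ∀ y ∈ Icc (x - δ) (x + δ), deriv φ y ∈ Ioo c (l * c) :=
    fun y hy => hball hy
  obtain ⟨j, hj⟩ := exists_common_zpow_slope hl₁ hdiff ordConnected_Icc hderiv
    fun p q h => hC.exists_zpow_slope hl hmono hpres h
  refine ⟨δ, hδ, j, (hC.hasBridges hl).sub_eq_of_isGap (M := l * c + l ^ j)
    (div_nonneg zero_le_two (by linarith)) ((div_lt_one (by linarith)).2 hl) ordConnected_Icc
    hj ?_⟩
  intro a ha b hb hab
  have hslope := slope_mem_of_deriv_mem hdiff ordConnected_Icc hderiv ha.2 hb.2 hab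
  rw [mem_Ioo, lt_div_iff₀ (sub_pos.2 hab), div_lt_iff₀ (sub_pos.2 hab)] at hslope
  have hj₀ : 0 < l ^ j := zpow_pos (by linarith) j
  rw [abs_le]
  constructor <;>
    nlinarith [hslope.1, hslope.2, mul_pos hc₀ (sub_pos.2 hab), mul_pos hj₀ (sub_pos.2 hab)]

end IsCentralCantor

/-- Any orientation-preserving `C¹` diffeomorphism of ℝ preserving the central Cantor
set `C_λ` (λ > 2) is, on a finite covering of `C_λ` by disjoint closed intervals,
affine with slopes integer powers of λ. -/
theorem diffeo_centralCantor_locally_affine (l : ℝ) (hl : 2 < l) (C : Set ℝ)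
    (hC : IsCentralCantor l C) (φ ψ : ℝ → ℝ) (hφ : IsC1DiffeoPair φ ψ)
    (hmono : StrictMono φ) (hpres : φ '' C = C) :
    ∃ (m : ℕ) (u v : Fin m → ℝ),
      (∀ k, u k ≤ v k) ∧
      (∀ k k', k ≠ k' → Set.Icc (u k) (v k) ∩ Set.Icc (u k') (v k') = ∅) ∧
      C ⊆ ⋃ k, Set.Icc (u k) (v k) ∧
      ∀ k, ∃ (j : ℤ) (c : ℝ), c ∈ C ∩ Set.Icc (u k) (v k) ∧
        ∀ x ∈ C ∩ Set.Icc (u k) (v k), φ x = φ c + l ^ j * (x - c) := by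
  choose δ hδ j hj using fun z : C =>
    hC.exists_affine_near hl hφ.1 hmono hpres (hφ.deriv_pos hmono.monotone z)
  obtain ⟨m, u, v, hu, hdisj, hcover⟩ := hC.1.exists_disjoint_Icc_cover
    (hC.hasBridges hl).dense_compl (U := fun z : C => Ioo (z - δ z) (z + δ z))
    (fun _ => isOpen_Ioo) fun x hx =>
      mem_iUnion.2 ⟨⟨x, hx⟩, by linarith [hδ ⟨x, hx⟩], by linarith [hδ ⟨x, hx⟩]⟩
  refine ⟨m, u, v, fun k => (hu k).2.1, hdisj, hcover, fun k => ?_⟩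
  obtain ⟨huC, hle, z, hz⟩ := hu k
  have hwindow : Icc (u k) (v k) ⊆ Icc (z - δ z) (z + δ z) := hz.trans Ioo_subset_Icc_self
  have hc : u k ∈ C ∩ Icc (u k) (v k) := ⟨huC, left_mem_Icc.2 hle⟩
  refine ⟨j z, u k, hc, fun x hx => ?_⟩
  linarith [hj z (u k) ⟨huC, hwindow hc.2⟩ x ⟨hx.1, hwindow hx.2⟩]
end
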